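/- Let α, β ∈ ℝ with α ≠ 0 and let u : ℝ³ → ℝ be infinitely differentiable in (t, x, y). Define G = ∂_t∂_x∂_y u + α ∂_x( (∂_x∂_y u)(∂_x² u) ) + β ∂_y( (∂_x∂_y u)(∂_y² u) ) + ∂_x⁴∂_y u + ∂_x∂_y⁴ u. Then for every (t,x,y) ∈ ℝ³: (∂_x² u)(∂_x∂_y u) = (1/α) [ ∂_x( x ( α (∂_x² u)(∂_x∂_y u) + ∂_x³∂_y u ) ) + ∂_y( x ( ∂_t∂_x u + β (∂_x∂_y u)(∂_y² u) + ∂_x∂_y³ u ) − ∂_x³ u ) − x G ]. -/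

import Mathlib

/-- Partial derivative with respect to `t` of a function of `(t,x,y)`. -/
noncomputable def Dt (u : ℝ → ℝ → ℝ → ℝ) : ℝ → ℝ → ℝ → ℝ :=
  fun t x y => deriv (fun s => u s x y) t

/-- Partial derivative with respect to `x`. -/
noncomputable def Dx (u : ℝ → ℝ → ℝ → ℝ) : ℝ → ℝ → ℝ → ℝ :=
  fun t x y => deriv (fun s => u t s y) x

/-- Partial derivative with respect to `y`. -/
noncomputable def Dy (u : ℝ → ℝ → ℝ → ℝ) : ℝ → ℝ → ℝ → ℝ :=
  fun t x y => deriv (fun s => u t x s) y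

/-- Joint infinite differentiability of a function of `(t,x,y)`. -/
def Smooth3 (u : ℝ → ℝ → ℝ → ℝ) : Prop :=
  ContDiff ℝ (⊤ : ℕ∞) fun p : ℝ × ℝ × ℝ => u p.1 p.2.1 p.2.2

/-!
The Novikov–Veselov operator is a divergence: `G = D_x Φ + D_y Ψ` with
`Φ = α u_xx u_xy + u_xxxy` and `Ψ = u_tx + β u_xy u_yy + u_xyyy`, once the mixed partials of the
smooth `u` are allowed to commute. Pairing this with the multiplier `x` gives
`D_x(x Φ) + D_y(x Ψ - u_xxx) - x G = Φ - u_xxxy = α u_xx u_xy`.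
-/

theorem ContDiff.fderiv_fderiv_apply_comm {E F : Type*} [NormedAddCommGroup E] [NormedSpace ℝ E]
    [NormedAddCommGroup F] [NormedSpace ℝ F] {f : E → F} (hf : ContDiff ℝ 2 f) (p v w : E) :
    fderiv ℝ (fun q => fderiv ℝ f q w) p v = fderiv ℝ (fun q => fderiv ℝ f q v) p w := by
  have hf' : DifferentiableAt ℝ (fderiv ℝ f) p :=
    (hf.fderiv_right le_rfl).differentiable one_ne_zero p
  have hsnd : ∀ a b : E, fderiv ℝ (fun q => fderiv ℝ f q a) p b = fderiv ℝ (fderiv ℝ f) p b a :=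
    fun a b => by rw [fderiv_clm_apply hf' (differentiableAt_const a)]; simp
  rw [hsnd, hsnd]
  exact hf.contDiffAt.isSymmSndFDerivAt (by simp) v w

def uncurry3 (u : ℝ → ℝ → ℝ → ℝ) : ℝ × ℝ × ℝ → ℝ := fun p => u p.1 p.2.1 p.2.2

namespace Smooth3

variable {u v : ℝ → ℝ → ℝ → ℝ}

theorem contDiff (hu : Smooth3 u) : ContDiff ℝ (⊤ : ℕ∞) (uncurry3 u) := hu

theorem hasDerivAt_t_fderiv (hu : Smooth3 u) (t x y : ℝ) :
    HasDerivAt (fun s => u s x y) (fderiv ℝ (uncurry3 u) (t, x, y) (1, 0, 0)) t :=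
  (hu.contDiff.differentiable (by simp) _).hasFDerivAt.comp_hasDerivAt t
    ((hasDerivAt_id t).prodMk (hasDerivAt_const t (x, y)))

theorem hasDerivAt_x_fderiv (hu : Smooth3 u) (t x y : ℝ) :
    HasDerivAt (fun s => u t s y) (fderiv ℝ (uncurry3 u) (t, x, y) (0, 1, 0)) x :=
  (hu.contDiff.differentiable (by simp) _).hasFDerivAt.comp_hasDerivAt x
    ((hasDerivAt_const x t).prodMk ((hasDerivAt_id x).prodMk (hasDerivAt_const x y)))

theorem hasDerivAt_y_fderiv (hu : Smooth3 u) (t x y : ℝ) :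
    HasDerivAt (fun s => u t x s) (fderiv ℝ (uncurry3 u) (t, x, y) (0, 0, 1)) y :=
  (hu.contDiff.differentiable (by simp) _).hasFDerivAt.comp_hasDerivAt y
    ((hasDerivAt_const y t).prodMk ((hasDerivAt_const y x).prodMk (hasDerivAt_id y)))

theorem Dt_eq_fderiv (hu : Smooth3 u) (t x y : ℝ) :
    Dt u t x y = fderiv ℝ (uncurry3 u) (t, x, y) (1, 0, 0) :=
  (hu.hasDerivAt_t_fderiv t x y).deriv

theorem Dx_eq_fderiv (hu : Smooth3 u) (t x y : ℝ) :
    Dx u t x y = fderiv ℝ (uncurry3 u) (t, x, y) (0, 1, 0) :=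
  (hu.hasDerivAt_x_fderiv t x y).deriv

theorem Dy_eq_fderiv (hu : Smooth3 u) (t x y : ℝ) :
    Dy u t x y = fderiv ℝ (uncurry3 u) (t, x, y) (0, 0, 1) :=
  (hu.hasDerivAt_y_fderiv t x y).deriv

theorem uncurry3_Dt (hu : Smooth3 u) :
    uncurry3 (Dt u) = fun p => fderiv ℝ (uncurry3 u) p (1, 0, 0) :=
  funext fun p => hu.Dt_eq_fderiv p.1 p.2.1 p.2.2

theorem uncurry3_Dx (hu : Smooth3 u) :
    uncurry3 (Dx u) = fun p => fderiv ℝ (uncurry3 u) p (0, 1, 0) :=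
  funext fun p => hu.Dx_eq_fderiv p.1 p.2.1 p.2.2

theorem uncurry3_Dy (hu : Smooth3 u) :
    uncurry3 (Dy u) = fun p => fderiv ℝ (uncurry3 u) p (0, 0, 1) :=
  funext fun p => hu.Dy_eq_fderiv p.1 p.2.1 p.2.2

theorem contDiff_fderiv_apply (hu : Smooth3 u) (e : ℝ × ℝ × ℝ) :
    ContDiff ℝ (⊤ : ℕ∞) fun p => fderiv ℝ (uncurry3 u) p e :=
  (hu.contDiff.fderiv_right (by simp)).clm_apply contDiff_const

protected theorem Dt (hu : Smooth3 u) : Smooth3 (Dt u) := by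
  have h := hu.contDiff_fderiv_apply (1, 0, 0)
  rwa [← hu.uncurry3_Dt] at h

protected theorem Dx (hu : Smooth3 u) : Smooth3 (Dx u) := by
  have h := hu.contDiff_fderiv_apply (0, 1, 0)
  rwa [← hu.uncurry3_Dx] at h

protected theorem Dy (hu : Smooth3 u) : Smooth3 (Dy u) := by
  have h := hu.contDiff_fderiv_apply (0, 0, 1)
  rwa [← hu.uncurry3_Dy] at h

theorem Dx_Dy_comm (hu : Smooth3 u) : Dx (Dy u) = Dy (Dx u) := by
  funext t x y
  rw [hu.Dy.Dx_eq_fderiv, hu.Dx.Dy_eq_fderiv, hu.uncurry3_Dy, hu.uncurry3_Dx]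
  exact (hu.contDiff.of_le (WithTop.coe_le_coe.mpr le_top)).fderiv_fderiv_apply_comm _ _ _

theorem Dt_Dy_comm (hu : Smooth3 u) : Dt (Dy u) = Dy (Dt u) := by
  funext t x y
  rw [hu.Dy.Dt_eq_fderiv, hu.Dt.Dy_eq_fderiv, hu.uncurry3_Dy, hu.uncurry3_Dt]
  exact (hu.contDiff.of_le (WithTop.coe_le_coe.mpr le_top)).fderiv_fderiv_apply_comm _ _ _

theorem hasDerivAt_x (hu : Smooth3 u) (t x y : ℝ) :
    HasDerivAt (fun s => u t s y) (Dx u t x y) x :=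
  (hu.hasDerivAt_x_fderiv t x y).differentiableAt.hasDerivAt

theorem hasDerivAt_y (hu : Smooth3 u) (t x y : ℝ) :
    HasDerivAt (fun s => u t x s) (Dy u t x y) y :=
  (hu.hasDerivAt_y_fderiv t x y).differentiableAt.hasDerivAt

protected theorem add (hu : Smooth3 u) (hv : Smooth3 v) :
    Smooth3 fun t x y => u t x y + v t x y :=
  hu.contDiff.add hv.contDiff

protected theorem mul (hu : Smooth3 u) (hv : Smooth3 v) :
    Smooth3 fun t x y => u t x y * v t x y :=
  hu.contDiff.mul hv.contDiff

protected theorem const_mul (c : ℝ) (hu : Smooth3 u) : Smooth3 fun t x y => c * u t x y :=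
  contDiff_const.mul hu.contDiff

end Smooth3

theorem Dx_coord_mul_add_Dy_coord_mul_sub {Φ Ψ w : ℝ → ℝ → ℝ → ℝ} {t x y : ℝ}
    (hΦ : DifferentiableAt ℝ (fun s => Φ t s y) x) (hΨ : DifferentiableAt ℝ (fun s => Ψ t x s) y)
    (hw : DifferentiableAt ℝ (fun s => w t x s) y) :
    Dx (fun t x y => x * Φ t x y) t x y + Dy (fun t x y => x * Ψ t x y - w t x y) t x y
      - x * (Dx Φ t x y + Dy Ψ t x y) = Φ t x y - Dy w t x y := by
  have hDx : Dx (fun t x y => x * Φ t x y) t x y = Φ t x y + x * Dx Φ t x y :=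
    ((hasDerivAt_id' x).mul hΦ.hasDerivAt).deriv.trans (by rw [one_mul]; rfl)
  have hDy : Dy (fun t x y => x * Ψ t x y - w t x y) t x y = x * Dy Ψ t x y - Dy w t x y :=
    ((hΨ.hasDerivAt.const_mul x).sub hw.hasDerivAt).deriv
  rw [hDx, hDy]
  ring

noncomputable def nvFluxX (α : ℝ) (u : ℝ → ℝ → ℝ → ℝ) : ℝ → ℝ → ℝ → ℝ :=
  fun t x y => α * Dx (Dx u) t x y * Dx (Dy u) t x y + Dy (Dx (Dx (Dx u))) t x y

noncomputable def nvFluxY (β : ℝ) (u : ℝ → ℝ → ℝ → ℝ) : ℝ → ℝ → ℝ → ℝ :=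
  fun t x y => Dt (Dx u) t x y + β * Dx (Dy u) t x y * Dy (Dy u) t x y + Dy (Dy (Dy (Dx u))) t x y

noncomputable def nvOperator (α β : ℝ) (u : ℝ → ℝ → ℝ → ℝ) : ℝ → ℝ → ℝ → ℝ :=
  fun t x y => Dt (Dx (Dy u)) t x y
    + α * Dx (fun t x y => Dx (Dy u) t x y * Dx (Dx u) t x y) t x y
    + β * Dy (fun t x y => Dx (Dy u) t x y * Dy (Dy u) t x y) t x y
    + Dy (Dx (Dx (Dx (Dx u)))) t x y
    + Dy (Dy (Dy (Dy (Dx u)))) t x y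

section NovikovVeselov

variable {u : ℝ → ℝ → ℝ → ℝ}

theorem Smooth3.nvFluxX (α : ℝ) (hu : Smooth3 u) : Smooth3 (nvFluxX α u) :=
  ((hu.Dx.Dx.const_mul α).mul hu.Dy.Dx).add hu.Dx.Dx.Dx.Dy

theorem Smooth3.nvFluxY (β : ℝ) (hu : Smooth3 u) : Smooth3 (nvFluxY β u) :=
  (hu.Dx.Dt.add ((hu.Dy.Dx.const_mul β).mul hu.Dy.Dy)).add hu.Dx.Dy.Dy.Dy

theorem Dx_nvFluxX_add_Dy_nvFluxY (α β : ℝ) (hu : Smooth3 u) (t x y : ℝ) :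
    Dx (nvFluxX α u) t x y + Dy (nvFluxY β u) t x y = nvOperator α β u t x y := by
  have hX : Dx (nvFluxX α u) t x y = _ :=
    ((((hu.Dx.Dx.hasDerivAt_x t x y).const_mul α).mul (hu.Dy.Dx.hasDerivAt_x t x y)).add
      (hu.Dx.Dx.Dx.Dy.hasDerivAt_x t x y)).deriv
  have hY : Dy (nvFluxY β u) t x y = _ :=
    (((hu.Dx.Dt.hasDerivAt_y t x y).add (((hu.Dy.Dx.hasDerivAt_y t x y).const_mul β).mul
      (hu.Dy.Dy.hasDerivAt_y t x y))).add (hu.Dx.Dy.Dy.Dy.hasDerivAt_y t x y)).deriv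
  have hP : Dx (fun t x y => Dx (Dy u) t x y * Dx (Dx u) t x y) t x y = _ :=
    ((hu.Dy.Dx.hasDerivAt_x t x y).mul (hu.Dx.Dx.hasDerivAt_x t x y)).deriv
  have hQ : Dy (fun t x y => Dx (Dy u) t x y * Dy (Dy u) t x y) t x y = _ :=
    ((hu.Dy.Dx.hasDerivAt_y t x y).mul (hu.Dy.Dy.hasDerivAt_y t x y)).deriv
  rw [nvOperator, hX, hY, hP, hQ, hu.Dx_Dy_comm, hu.Dx.Dt_Dy_comm,
    hu.Dx.Dx.Dx.Dx_Dy_comm]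
  ring

end NovikovVeselov

/-- Divergence identity for the conserved momentum density `u_{xx} u_{xy}` of the
Novikov--Veselov equation in potential form
`G = u_{txy} + α (u_{xy} u_{xx})_x + β (u_{xy} u_{yy})_y + u_{xxxxy} + u_{xyyyy}`:
`u_{xx} u_{xy} = (1/α)[D_x(x(α u_{xx} u_{xy} + u_{xxxy}))
 + D_y(x(u_{tx} + β u_{xy} u_{yy} + u_{xyyy}) - u_{xxx}) - x G]`. -/
theorem nv_momentum_divergence_identity (α β : ℝ) (hα : α ≠ 0)
    (u : ℝ → ℝ → ℝ → ℝ) (hu : Smooth3 u)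
    (G : ℝ → ℝ → ℝ → ℝ)
    (hG : ∀ t x y, G t x y = Dt (Dx (Dy u)) t x y
      + α * Dx (fun t x y => Dx (Dy u) t x y * Dx (Dx u) t x y) t x y
      + β * Dy (fun t x y => Dx (Dy u) t x y * Dy (Dy u) t x y) t x y
      + Dy (Dx (Dx (Dx (Dx u)))) t x y
      + Dy (Dy (Dy (Dy (Dx u)))) t x y) :
    ∀ t x y : ℝ,
      Dx (Dx u) t x y * Dx (Dy u) t x y =
        (1 / α) * (Dx (fun t x y => x * (α * Dx (Dx u) t x y * Dx (Dy u) t x y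
            + Dy (Dx (Dx (Dx u))) t x y)) t x y
          + Dy (fun t x y => x * (Dt (Dx u) t x y
              + β * Dx (Dy u) t x y * Dy (Dy u) t x y
              + Dy (Dy (Dy (Dx u))) t x y)
            - Dx (Dx (Dx u)) t x y) t x y
          - x * G t x y) := by
  intro t x y
  have hdiv : G t x y = Dx (nvFluxX α u) t x y + Dy (nvFluxY β u) t x y :=
    (hG t x y).trans (Dx_nvFluxX_add_Dy_nvFluxY α β hu t x y).symm
  have hmultiplier := Dx_coord_mul_add_Dy_coord_mul_sub
    ((hu.nvFluxX α).hasDerivAt_x t x y).differentiableAt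
    ((hu.nvFluxY β).hasDerivAt_y t x y).differentiableAt
    (hu.Dx.Dx.Dx.hasDerivAt_y t x y).differentiableAt
  rw [← hdiv] at hmultiplier
  simp only [nvFluxX, nvFluxY] at hmultiplier
  rw [hmultiplier]
  field_simp
  ring
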